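/- For n ≥ m ≥ 1, W_{3n,≥m} = (3n)! · ∑_{k=1}^{n} (-1)^k ∑_{i_1+⋯+i_k=n, i_j ≥ m} 1/((3i_1)!⋯(3i_k)!). -/

import Mathlib

/-!
The exponential generating function of `W` is `(1 + h(t³))⁻¹` with
`h(x) = ∑_{l ≥ m} x^l/(3l)!`, so `W_{3n}/(3n)!` is the `n`-th coefficient of
`(1 + h)⁻¹ = ∑_k (-h)^k`. As `h` has no constant term, only `k ≤ n` contribute, and the
`n`-th coefficient of `h^k` is the sum of `∏ 1/(3 i_j)!` over the compositions `i` of `n`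
into `k` parts `≥ m`.
-/

open Finset PowerSeries

namespace PowerSeries

variable {R : Type*}

theorem coeff_pow_eq_sum_antidiagonalTuple [CommSemiring R] (φ : R⟦X⟧) (k d : ℕ) :
    coeff d (φ ^ k) = ∑ t ∈ Nat.antidiagonalTuple k d, ∏ j, coeff (t j) φ := by
  rw [← Fin.prod_const, coeff_prod, ← piAntidiag_univ_fin_eq_antidiagonalTuple, finsuppAntidiag,
    sum_map]
  exact sum_attach _ fun t : Fin k → ℕ => ∏ j, coeff (t j) φ

theorem coeff_eq_sum_of_mul_one_add_eq_one [CommRing R] {A h : R⟦X⟧}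
    (hh : constantCoeff h = 0) (hA : A * (1 + h) = 1) (d : ℕ) :
    coeff d A = ∑ k ∈ range (d + 1), (-1) ^ k * coeff d (h ^ k) := by
  have hgeom : A = ∑ k ∈ range (d + 1), (-h) ^ k + A * (-h) ^ (d + 1) := by
    linear_combination (∑ k ∈ range (d + 1), (-h) ^ k) * hA + A * geom_sum_mul (-h) (d + 1)
  have herr : coeff d (A * (-h) ^ (d + 1)) = 0 := by
    have hX : X ^ (d + 1) ∣ A * (-h) ^ (d + 1) :=
      dvd_mul_of_dvd_right (pow_dvd_pow_of_dvd (X_dvd_iff.2 (by simp [hh])) _) _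
    exact X_pow_dvd_iff.1 hX d d.lt_add_one
  rw [hgeom, map_add, herr, add_zero, map_sum]
  refine sum_congr rfl fun k _ => ?_
  rw [neg_pow, ← map_one (C (R := R)), ← map_neg, ← map_pow, coeff_C_mul]

theorem coeff_expand_mul_eq_sum_of_mul_one_add_expand_eq_one [CommRing R] {A g : R⟦X⟧}
    {p : ℕ} (hp : p ≠ 0) (hg : constantCoeff g = 0) (hA : A * (1 + expand p hp g) = 1)
    (n : ℕ) :
    coeff (p * n) A = ∑ k ∈ range (n + 1), (-1) ^ k * coeff n (g ^ k) := by
  set B := invOfUnit (1 + g) 1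
  have hB : B * (1 + g) = 1 := invOfUnit_mul _ _ (by simp [hg])
  have hAB : A = expand p hp B := by
    calc A = A * expand p hp (B * (1 + g)) := by rw [hB, map_one, mul_one]
      _ = A * (1 + expand p hp g) * expand p hp B := by rw [map_mul, map_add, map_one]; ring
      _ = expand p hp B := by rw [hA, one_mul]
  rw [hAB, coeff_expand_mul, coeff_eq_sum_of_mul_one_add_eq_one hg hB]

end PowerSeries

/-- Expanded by `3`, this is the tail `∑_{l ≥ m} t^{3l}/(3l)!` of the series defining `W`. -/
noncomputable def lehmerTail (m : ℕ) : ℚ⟦X⟧ :=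
  mk fun l => if m ≤ l then 1 / ((3 * l).factorial : ℚ) else 0

theorem constantCoeff_lehmerTail {m : ℕ} (hm : 0 < m) : constantCoeff (lehmerTail m) = 0 := by
  simp [lehmerTail, ← coeff_zero_eq_constantCoeff_apply, hm.ne']

theorem one_add_expand_lehmerTail {m : ℕ} (hm : 0 < m) :
    1 + expand 3 three_ne_zero (lehmerTail m) = mk fun j => if j = 0 then (1 : ℚ)
      else if 3 ∣ j ∧ 3 * m ≤ j then (1 : ℚ) / (j.factorial : ℚ) else 0 := by
  ext j
  rcases eq_or_ne j 0 with rfl | hj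
  · simp [lehmerTail, hm.ne']
  · by_cases h3 : 3 ∣ j
    · obtain ⟨l, rfl⟩ := h3
      simp [lehmerTail, coeff_one, hj]
    · simp [coeff_one, hj, h3, coeff_expand_of_not_dvd _ _ _ h3]

theorem coeff_lehmerTail_pow (m k n : ℕ) :
    coeff n (lehmerTail m ^ k) =
      ∑ i ∈ (Nat.antidiagonalTuple k n).filter (fun i => ∀ j, m ≤ i j),
        ∏ j, (1 : ℚ) / ((3 * i j).factorial : ℚ) := by
  rw [coeff_pow_eq_sum_antidiagonalTuple, sum_filter]
  simp only [lehmerTail, coeff_mk, prod_ite_zero, mem_univ, true_implies]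

/-- Explicit formula for the associated incomplete Lehmer-Euler numbers: for `n ≥ m ≥ 1`,
`W_{3n,≥m} = (3n)! ∑_{k=1}^n (-1)^k ∑_{i₁+⋯+i_k=n, i_j ≥ m} 1/((3i₁)!⋯(3i_k)!)`. -/
theorem incomplete_lehmer_euler_ge_explicit (m : ℕ) (hm : 1 ≤ m) (W : ℕ → ℚ)
    (hW : (PowerSeries.mk fun n => W n / (n.factorial : ℚ)) *
      (PowerSeries.mk fun j => if j = 0 then (1 : ℚ)
        else if 3 ∣ j ∧ 3 * m ≤ j then (1 : ℚ) / (j.factorial : ℚ) else 0) = 1)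
    (n : ℕ) (hn : m ≤ n) :
    W (3 * n) = ((3 * n).factorial : ℚ) *
      ∑ k ∈ Finset.Icc 1 n, (-1 : ℚ) ^ k *
        ∑ i ∈ (Finset.Nat.antidiagonalTuple k n).filter (fun i => ∀ j, m ≤ i j),
          ∏ j, (1 : ℚ) / ((3 * i j).factorial : ℚ) := by
  rw [← one_add_expand_lehmerTail hm] at hW
  have hcoeff := coeff_expand_mul_eq_sum_of_mul_one_add_expand_eq_one three_ne_zero
    (constantCoeff_lehmerTail hm) hW n
  rw [coeff_mk, Nat.range_succ_eq_Icc_zero, ← insert_Icc_add_one_left_eq_Icc n.zero_le,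
    sum_insert (by simp), pow_zero, pow_zero, one_mul, coeff_one, if_neg (by omega),
    zero_add, zero_add, div_eq_iff (by positivity)] at hcoeff
  simp only [coeff_lehmerTail_pow] at hcoeff
  rw [hcoeff, mul_comm]
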